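/- arXiv:2306.04747 — 2 statements merged into one kernel-verified Lean document; each statement's English description precedes it below -/
import Mathlib

section
/- The curve w̃ in ℓ² defined by w̃(t) = (2√2/π) · Σ_{k=1}^∞ sin(π(k−1/2)t)/(2k−1) · e_k for t ∈ [0,1] satisfies ‖w̃(t) − w̃(s)‖₂ = √|t−s| for all s, t ∈ [0,1]. -/
/-!
Product-to-sum turns `∑ sin((2n+1)x) sin((2n+1)y) / (2n+1)²` into a difference of two values of
the triangle-wave series `∑ cos((2n+1)θ) / (2n+1)² = π²/8 - πθ/4`, which is the odd part of the
Fourier series of the Bernoulli polynomial `B₂`. This gives `⟪w̃ t, w̃ s⟫ = min t s`, so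
`‖w̃ t - w̃ s‖² = t + s - 2 min t s = |t - s|`.
-/

open Real Set

/-- The `n = 0` term is `cos 0 / 0 = 0`, so this is the series over `n ≥ 1`. -/
lemma hasSum_cos_mul_div_sq {θ : ℝ} (hθ : θ ∈ Icc 0 (2 * π)) :
    HasSum (fun n : ℕ => cos (n * θ) / (n : ℝ) ^ 2) (θ ^ 2 / 4 - π * θ / 2 + π ^ 2 / 6) := by
  have hx : θ / (2 * π) ∈ Icc (0 : ℝ) 1 :=
    ⟨by have := hθ.1; positivity, (div_le_one (by positivity)).2 hθ.2⟩
  have h := hasSum_one_div_nat_pow_mul_cos one_ne_zero hx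
  rw [← bernoulliFun, mul_one, bernoulliFun_two] at h
  convert! h using 1
  · funext n
    rw [show 2 * π * n * (θ / (2 * π)) = n * θ by field_simp]
    ring
  · field_simp
    ring

lemma hasSum_cos_odd_mul_div_sq {θ : ℝ} (hθ : θ ∈ Icc 0 π) :
    HasSum (fun n : ℕ => cos ((2 * n + 1) * θ) / (2 * n + 1 : ℝ) ^ 2) (π ^ 2 / 8 - π * θ / 4) := by
  set f : ℕ → ℝ := fun n => cos (n * θ) / (n : ℝ) ^ 2
  have hall : HasSum f (θ ^ 2 / 4 - π * θ / 2 + π ^ 2 / 6) :=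
    hasSum_cos_mul_div_sq ⟨hθ.1, by linarith [hθ.2, pi_pos]⟩
  have heven : HasSum (fun n => f (2 * n)) (θ ^ 2 / 4 - π * θ / 4 + π ^ 2 / 24) := by
    have h := hasSum_cos_mul_div_sq (θ := 2 * θ) ⟨by linarith [hθ.1], by linarith [hθ.2]⟩
    convert! h.div_const 4 using 1
    · funext n
      simp only [f]
      push_cast
      ring_nf
    · ring
  obtain ⟨o, hodd⟩ : Summable fun n => f (2 * n + 1) :=
    hall.summable.comp_injective fun m n h => by simpa using h
  have ho : o = π ^ 2 / 8 - π * θ / 4 := by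
    have := (heven.even_add_odd hodd).unique hall
    linarith
  subst ho
  convert hodd using 2 with n
  simp only [f]
  push_cast
  rfl

lemma hasSum_sin_odd_mul_sin_odd_div_sq {x y : ℝ} (hx : x ∈ Icc 0 (π / 2))
    (hy : y ∈ Icc 0 (π / 2)) :
    HasSum (fun n : ℕ => sin ((2 * n + 1) * x) * sin ((2 * n + 1) * y) / (2 * n + 1 : ℝ) ^ 2)
      (π / 4 * min x y) := by
  have hdiff := hasSum_cos_odd_mul_div_sq (θ := |x - y|) ⟨abs_nonneg _,
    abs_sub_le_iff.2 ⟨by linarith [hx.2, hy.1, pi_pos], by linarith [hx.1, hy.2, pi_pos]⟩⟩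
  have hsum := hasSum_cos_odd_mul_div_sq (θ := x + y)
    ⟨by linarith [hx.1, hy.1], by linarith [hx.2, hy.2]⟩
  convert! (hdiff.sub hsum).div_const 2 using 1
  · funext n
    have hpos : (0 : ℝ) ≤ 2 * n + 1 := by positivity
    rw [← abs_of_nonneg hpos, ← abs_mul, cos_abs, abs_of_nonneg hpos, mul_sub, mul_add, cos_sub,
      cos_add]
    ring
  · rw [abs_sub_comm, ← max_sub_min_eq_abs, ← min_add_max x y]
    ring

theorem lp.coeFn_eq_of_hasSum_smul_single {α 𝕜 : Type*} [DecidableEq α] [NormedField 𝕜]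
    {p : ENNReal} [Fact (1 ≤ p)] {a : α → 𝕜} {f : lp (fun _ : α => 𝕜) p}
    (h : HasSum (fun i => a i • lp.single p i (1 : 𝕜)) f) : ⇑f = a := by
  funext j
  refine ((lp.evalCLM 𝕜 (fun _ : α => 𝕜) p j).hasSum h).unique ?_
  convert! hasSum_ite_eq j (a j) using 2 with i
  rcases eq_or_ne i j with rfl | hij <;> simp_all [lp.evalCLM]

noncomputable def wienerCoeff (k : ℕ) (t : ℝ) : ℝ :=
  2 * √2 / π * (sin (π * (k + 1 / 2) * t) / (2 * k + 1))

lemma hasSum_wienerCoeff_mul_wienerCoeff {s t : ℝ} (hs : s ∈ Icc (0 : ℝ) 1)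
    (ht : t ∈ Icc (0 : ℝ) 1) :
    HasSum (fun k => wienerCoeff k t * wienerCoeff k s) (min t s) := by
  have hscale : ∀ {r : ℝ}, r ∈ Icc (0 : ℝ) 1 → π / 2 * r ∈ Icc 0 (π / 2) := fun hr =>
    ⟨by have := hr.1; positivity, mul_le_of_le_one_right (by positivity) hr.2⟩
  convert! (hasSum_sin_odd_mul_sin_odd_div_sq (hscale ht) (hscale hs)).mul_left (8 / π ^ 2)
    using 1
  · funext k
    have h2 : √2 ^ 2 = 2 := sq_sqrt zero_le_two
    have harg : ∀ r : ℝ, π * ((k : ℝ) + 1 / 2) * r = (2 * k + 1) * (π / 2 * r) := fun r => by ring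
    simp only [wienerCoeff, harg]
    field_simp
    rw [h2]
    ring
  · rw [← mul_min_of_nonneg _ _ (by positivity)]
    field_simp
    ring

/-- The Wiener spiral curve `w̃` in `ℓ²` satisfies `‖w̃ t - w̃ s‖ = √|t - s|`. -/
theorem stmt_1 (w : ℝ → lp (fun _ : ℕ => ℝ) 2)
    (hw : ∀ t ∈ Set.Icc (0:ℝ) 1,
      HasSum (fun k : ℕ =>
        ((2 * Real.sqrt 2 / Real.pi) *
          (Real.sin (Real.pi * ((k : ℝ) + 1/2) * t) / (2 * (k : ℝ) + 1)))
            • lp.single 2 k (1:ℝ)) (w t)) :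
    ∀ s ∈ Set.Icc (0:ℝ) 1, ∀ t ∈ Set.Icc (0:ℝ) 1,
      ‖w t - w s‖ = Real.sqrt |t - s| := by
  have hcoord : ∀ t ∈ Icc (0 : ℝ) 1, ⇑(w t) = fun k => wienerCoeff k t := fun t ht =>
    lp.coeFn_eq_of_hasSum_smul_single (hw t ht)
  have hinner : ∀ s ∈ Icc (0 : ℝ) 1, ∀ t ∈ Icc (0 : ℝ) 1, inner ℝ (w t) (w s) = min t s := by
    intro s hs t ht
    refine (lp.hasSum_inner (w t) (w s)).unique ?_
    simpa only [hcoord t ht, hcoord s hs, RCLike.inner_apply', conj_trivial]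
      using hasSum_wienerCoeff_mul_wienerCoeff hs ht
  intro s hs t ht
  have hsq : ‖w t - w s‖ ^ 2 = |t - s| := by
    rw [norm_sub_sq_real, ← real_inner_self_eq_norm_sq, ← real_inner_self_eq_norm_sq,
      hinner t ht t ht, hinner s hs s hs, hinner s hs t ht, min_self, min_self, abs_sub_comm,
      ← max_sub_min_eq_abs]
    linarith [min_add_max t s]
  rw [← hsq, sqrt_sq (norm_nonneg _)]
end

section
/- Let (x_k, y_k)_{k∈ℕ} ⊂ [0,T] × (0,∞) with Σ_{k : x_k ≤ T} y_k < ∞ and, for every s > 0, {k : x_k ≤ T, y_k > s} finite. Then the set {C(t) : 0 ≤ t ≤ T} ⊂ ℓ², where C(t) = Σ_{k: x_k ≤ t} √(y_k) e_k, is totally bounded; hence its closure is compact in ℓ². -/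
/-- The range `{C(t) : 0 ≤ t ≤ T}` of a crinkled subordinator is totally bounded in `ℓ²`,
hence its closure is compact. -/
theorem stmt_11 (T : ℝ) (x y : ℕ → ℝ)
    (hx : ∀ k, x k ∈ Set.Icc 0 T) (hy : ∀ k, 0 < y k)
    (hsum : Summable y)
    (hfin : ∀ s : ℝ, 0 < s → {k : ℕ | s < y k}.Finite)
    (C : ℝ → lp (fun _ : ℕ => ℝ) 2)
    (hC : ∀ t ∈ Set.Icc (0:ℝ) T,
      HasSum ({k : ℕ | x k ≤ t}.indicator fun k => Real.sqrt (y k) • lp.single 2 k (1:ℝ))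
        (C t)) :
    TotallyBounded (C '' Set.Icc 0 T) ∧ IsCompact (closure (C '' Set.Icc 0 T)) := by
  classical
  -- coordinates of C t
  have coord : ∀ t ∈ Set.Icc (0:ℝ) T, ∀ k : ℕ,
      (C t : ∀ _ : ℕ, ℝ) k = if x k ≤ t then Real.sqrt (y k) else 0 := by
    intro t ht k
    have hL : ∀ v : lp (fun _ : ℕ => ℝ) 2,
        (innerSL ℝ (lp.single 2 k (1:ℝ))) v = (v : ∀ _ : ℕ, ℝ) k := by
      intro v
      simp [innerSL_apply_apply, lp.inner_single_left, real_inner_comm]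
    have h1 := (innerSL ℝ (lp.single 2 k (1:ℝ))).hasSum (hC t ht)
    rw [hL] at h1
    set f : ℕ → lp (fun _ : ℕ => ℝ) 2 :=
      {k : ℕ | x k ≤ t}.indicator fun k => Real.sqrt (y k) • lp.single 2 k (1:ℝ) with hf
    have h2 : HasSum (fun j : ℕ => (innerSL ℝ (lp.single 2 k (1:ℝ))) (f j))
        (if x k ≤ t then Real.sqrt (y k) else 0) := by
      have heq : ∀ j : ℕ, (innerSL ℝ (lp.single 2 k (1:ℝ))) (f j)
          = if j = k then (if x k ≤ t then Real.sqrt (y k) else 0) else 0 := by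
        intro j
        by_cases hj : x j ≤ t
        · rw [hf, Set.indicator_of_mem (by exact hj), hL]
          by_cases hjk : j = k
          · subst hjk
            simp [lp.coeFn_smul, lp.single_apply_self, hj]
          · simp [lp.coeFn_smul, lp.single_apply_ne (E := fun _ : ℕ => ℝ) 2 j (1:ℝ) (Ne.symm hjk), hjk]
        · rw [hf, Set.indicator_of_notMem (by exact hj)]
          by_cases hjk : j = k
          · subst hjk; simp [hj]
          · simp [hjk]
      simp_rw [heq]
      exact hasSum_ite_eq k _
    exact h1.unique h2
  have key : TotallyBounded (C '' Set.Icc 0 T) := by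
    rw [Metric.totallyBounded_iff]
    intro ε hε
    -- choose F₀ with small tail
    have htail := tendsto_tsum_compl_atTop_zero (f := y)
    have hev : ∀ᶠ s : Finset ℕ in Filter.atTop,
        (∑' a : {n : ℕ // n ∉ s}, y a) < ε ^ 2 :=
      (Filter.Tendsto.eventually_lt_const (by positivity) htail)
    obtain ⟨F₀', hF₀'⟩ := Filter.eventually_atTop.1 hev
    set F₀ : Finset ℕ := insert 0 F₀' with hF₀def
    have hF₀ : (∑' a : {n : ℕ // n ∉ F₀}, y a) < ε ^ 2 :=
      hF₀' F₀ (Finset.subset_insert 0 F₀')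
    have hne : F₀.Nonempty := ⟨0, Finset.mem_insert_self 0 F₀'⟩
    set δ : ℝ := (F₀.inf' hne y) / 2 with hδdef
    have hinfpos : 0 < F₀.inf' hne y := by
      obtain ⟨k, hk, hkeq⟩ := Finset.exists_mem_eq_inf' hne y
      rw [hkeq]; exact hy k
    have hδpos : 0 < δ := by positivity
    have hδlt : ∀ k ∈ F₀, δ < y k := fun k hk =>
      lt_of_lt_of_le (by rw [hδdef]; linarith) (Finset.inf'_le y hk)
    set F' : Finset ℕ := (hfin δ hδpos).toFinset with hF'def
    have hF'mem : ∀ k : ℕ, k ∈ F' ↔ δ < y k := by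
      intro k; rw [hF'def, Set.Finite.mem_toFinset]; rfl
    refine ⟨(fun A : Finset ℕ =>
        ((∑ k ∈ A, Real.sqrt (y k) • lp.single 2 k (1:ℝ)) : lp (fun _ : ℕ => ℝ) 2)) ''
        ↑F'.powerset, Set.Finite.image _ (F'.powerset.finite_toSet), ?_⟩
    rintro _ ⟨t, ht, rfl⟩
    set A : Finset ℕ := F'.filter (fun k => x k ≤ t) with hAdef
    set g : lp (fun _ : ℕ => ℝ) 2 := ∑ k ∈ A, Real.sqrt (y k) • lp.single 2 k (1:ℝ) with hgdef
    refine Set.mem_iUnion₂.2 ⟨g, ⟨A, by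
      simp only [Finset.coe_powerset, Set.mem_preimage, Set.mem_powerset_iff,
        Finset.coe_subset]
      exact Finset.filter_subset _ _, rfl⟩, ?_⟩
    rw [Metric.mem_ball, dist_eq_norm]
    set d : lp (fun _ : ℕ => ℝ) 2 := C t - g with hddef
    set B : Set ℕ := {k | x k ≤ t ∧ y k ≤ δ} with hBdef
    have hgco : ∀ m : ℕ, (g : ∀ _ : ℕ, ℝ) m = if m ∈ A then Real.sqrt (y m) else 0 := by
      intro m
      rw [hgdef, lp.coeFn_sum, Finset.sum_apply]
      have hterm : ∀ k ∈ A,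
          ((Real.sqrt (y k) • lp.single 2 k (1:ℝ) : lp (fun _ : ℕ => ℝ) 2) : ∀ _ : ℕ, ℝ) m
            = if m = k then Real.sqrt (y k) else 0 := by
        intro k _
        rw [lp.coeFn_smul, Pi.smul_apply, smul_eq_mul]
        by_cases h : m = k
        · subst h; rw [lp.single_apply_self, if_pos rfl, mul_one]
        · rw [lp.single_apply_ne (E := fun _ : ℕ => ℝ) 2 k (1:ℝ) h, if_neg h, mul_zero]
      rw [Finset.sum_congr rfl hterm]
      exact Finset.sum_ite_eq A m fun k => Real.sqrt (y k)
    have hdco : ∀ k : ℕ, (d : ∀ _ : ℕ, ℝ) k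
        = B.indicator (fun k => Real.sqrt (y k)) k := by
      intro k
      rw [hddef, lp.coeFn_sub, Pi.sub_apply, coord t ht k, hgco k]
      by_cases h1 : x k ≤ t
      · by_cases h2 : δ < y k
        · have hkA : k ∈ A := by
            rw [hAdef, Finset.mem_filter, hF'mem]; exact ⟨h2, h1⟩
          have hkB : k ∉ B := fun hk => absurd hk.2 (not_le.2 h2)
          rw [if_pos h1, if_pos hkA, Set.indicator_of_notMem hkB, sub_self]
        · have hkA : k ∉ A := by
            rw [hAdef, Finset.mem_filter, hF'mem]; tauto
          have hkB : k ∈ B := ⟨h1, not_lt.1 h2⟩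
          rw [if_pos h1, if_neg hkA, Set.indicator_of_mem hkB, sub_zero]
      · have hkA : k ∉ A := by
          rw [hAdef, Finset.mem_filter]; tauto
        have hkB : k ∉ B := fun hk => absurd hk.1 h1
        rw [if_neg h1, if_neg hkA, Set.indicator_of_notMem hkB, sub_zero]
    have hp2 : 0 < (2 : ENNReal).toReal := by norm_num
    have hnorm := lp.norm_rpow_eq_tsum hp2 d
    have htoreal : (2 : ENNReal).toReal = (2 : ℝ) := by norm_num
    have hterm : ∀ k : ℕ, ‖(d : ∀ _ : ℕ, ℝ) k‖ ^ (2 : ENNReal).toReal = B.indicator y k := by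
      intro k
      rw [htoreal, hdco k]
      by_cases hk : k ∈ B
      · rw [Set.indicator_of_mem hk, Set.indicator_of_mem hk,
          Real.norm_eq_abs, abs_of_nonneg (Real.sqrt_nonneg _),
          show (2:ℝ) = ((2:ℕ):ℝ) by norm_num, Real.rpow_natCast,
          Real.sq_sqrt (hy k).le]
      · rw [Set.indicator_of_notMem hk, Set.indicator_of_notMem hk, norm_zero]
        rw [show (2:ℝ) = ((2:ℕ):ℝ) by norm_num, Real.rpow_natCast]
        norm_num
    have hBsub : B ⊆ (↑F₀ : Set ℕ)ᶜ := by
      intro k hk hkF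
      exact absurd hk.2 (not_le.2 (hδlt k hkF))
    have htail2 : (∑' a : {n : ℕ // n ∉ F₀}, y a)
        = ∑' k : ℕ, ((↑F₀ : Set ℕ)ᶜ).indicator y k := tsum_subtype _ y
    have hle : (∑' k : ℕ, B.indicator y k) ≤ ∑' a : {n : ℕ // n ∉ F₀}, y a := by
      rw [htail2]
      exact Summable.tsum_le_tsum
        (fun k => Set.indicator_le_indicator_of_subset hBsub (fun a => (hy a).le) k)
        (hsum.indicator B) (hsum.indicator _)
    have hlt : ‖d‖ ^ (2 : ENNReal).toReal < ε ^ 2 := by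
      rw [hnorm]
      calc (∑' k : ℕ, ‖(d : ∀ _ : ℕ, ℝ) k‖ ^ (2 : ENNReal).toReal)
          = ∑' k : ℕ, B.indicator y k := tsum_congr hterm
        _ ≤ ∑' a : {n : ℕ // n ∉ F₀}, y a := hle
        _ < ε ^ 2 := hF₀
    rw [htoreal, show (2:ℝ) = ((2:ℕ):ℝ) by norm_num, Real.rpow_natCast] at hlt
    exact lt_of_pow_lt_pow_left₀ 2 hε.le hlt
  exact ⟨key, TotallyBounded.isCompact_of_isClosed key.closure isClosed_closure⟩
end
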